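/- For any piezoelectricity tensor P (third-order, symmetric in its last two indices), the tensor H defined by H_{ijk} := (1/3)(P_{ijk}+P_{kij}+P_{jik}) − (1/5)(δ_{ij}u'_k + δ_{ik}u'_j + δ_{jk}u'_i), with u'_i := (1/3)(P_{ipp} + 2P_{ppi}), is totally symmetric and traceless (harmonic). -/
import Mathlib


open scoped BigOperators

/-- Kronecker delta on `Fin 3`. -/
def kdelta (i j : Fin 3) : ℝ := if i = j then 1 else 0

lemma kdelta_comm (i j : Fin 3) : kdelta i j = kdelta j i := by
  unfold kdelta; by_cases h : i = j <;> simp [h, Ne.symm, eq_comm]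

/-- For a piezoelectricity tensor `P` (`P_{ijk} = P_{ikj}`), the tensor
`H_{ijk} = (1/3)(P_{ijk}+P_{kij}+P_{jik}) − (1/5)(δ_{ij}u'_k+δ_{ik}u'_j+δ_{jk}u'_i)`,
with `u'_i = (1/3)(P_{ipp}+2P_{ppi})`, is totally symmetric and traceless. -/
theorem schurWeyl_H_harmonic (P : Fin 3 → Fin 3 → Fin 3 → ℝ)
    (hP : ∀ i j k, P i j k = P i k j)
    (u' : Fin 3 → ℝ)
    (hu : ∀ i, u' i = (1/3) * ((∑ p, P i p p) + 2 * ∑ p, P p p i))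
    (H : Fin 3 → Fin 3 → Fin 3 → ℝ)
    (hH : ∀ i j k, H i j k = (1/3) * (P i j k + P k i j + P j i k)
      - (1/5) * (kdelta i j * u' k + kdelta i k * u' j + kdelta j k * u' i)) :
    (∀ i j k, H i j k = H j i k ∧ H i j k = H i k j) ∧
    (∀ k, (∑ i, H i i k = 0) ∧ (∑ i, H i k i = 0) ∧ (∑ i, H k i i = 0)) := by
  constructor
  · intro i j k
    constructor
    · rw [hH, hH, hP k i j, kdelta_comm i j]; ring
    · rw [hH, hH, hP i j k, kdelta_comm j k]; ring
  · intro k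
    fin_cases k <;>
      refine ⟨?_, ?_, ?_⟩ <;>
      · simp only [hH, hu, kdelta, Fin.sum_univ_three,
          show (⟨2, by norm_num⟩ : Fin 3) = 2 from rfl]
        norm_num [Fin.ext_iff]
        linarith [hP 0 0 1, hP 0 0 2, hP 0 1 2, hP 1 0 1, hP 1 0 2, hP 1 1 2,
          hP 2 0 1, hP 2 0 2, hP 2 1 2]
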